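/- arXiv:2105.02349 — 4 statements merged into one kernel-verified Lean document; each statement's English description precedes it below -/
import Mathlib

section
/- For all t > 0, ∫_0^t K(t-s) W'(s) ds = 1 - b·W(t), where K(t) = c t^{-α}/Γ(1-α); that is, K * W' = 1 - bW on (0,∞). -/
/-!
With `q = -b/c`, expand `W'(s) = c⁻¹ Σ qⁿ s^{α(n+1)-1} / Γ(α(n+1))` and integrate
termwise. Against the kernel `K` each term is a Beta integral, so `K * W' = E_{α,1}(q t^α)`,
while `W(t) = c⁻¹ t^α E_{α,α+1}(q t^α)`, where `E_{α,β}(x) = Σ xⁿ / Γ(αn + β)`. The claim is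
then the recursion `E_{α,1}(x) = 1 + x E_{α,α+1}(x)`. The series converge absolutely by the
ratio test, since log-convexity of `Γ` gives `Γ(z + α) ≥ (z - 1)^α Γ(z)`; this justifies the
termwise integration.
-/

open MeasureTheory

/-- Mittag-Leffler function `E_{α,α}(x) = Σ_{n=0}^∞ xⁿ / Γ(α(n+1))`. -/
noncomputable def mlf (α x : ℝ) : ℝ := ∑' n : ℕ, x ^ n / Real.Gamma (α * (n + 1))

/-- Derivative of the scale function: `W'(x) = c⁻¹ x^{α-1} E_{α,α}(-(b/c) x^α)`. -/
noncomputable def Wd (α c b : ℝ) (x : ℝ) : ℝ := c⁻¹ * x ^ (α - 1) * mlf α (-(b / c) * x ^ α)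

/-- Scale function: `W(x) = ∫_0^x W'(s) ds` for `x ≥ 0`, and `W(x) = 0` for `x < 0`. -/
noncomputable def Wsc (α c b : ℝ) (x : ℝ) : ℝ :=
  if x ≤ 0 then 0 else ∫ s in (0:ℝ)..x, Wd α c b s

open Set Filter Real

theorem Real.rpow_sub_one_mul_Gamma_le_Gamma_add {z a : ℝ} (hz : 1 < z) (ha : 0 < a) :
    (z - 1) ^ a * Gamma z ≤ Gamma (z + a) := by
  have hz1 : 0 < z - 1 := by linarith
  have hlog : log (Gamma z) - log (Gamma (z - 1)) = log (z - 1) := by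
    rw [sub_eq_iff_eq_add, ← log_mul hz1.ne' (Gamma_pos_of_pos hz1).ne',
      ← Gamma_add_one hz1.ne', sub_add_cancel]
  have hslope := convexOn_log_Gamma.slope_mono_adjacent (x := z - 1) (y := z) (z := z + a)
    (mem_Ioi.2 hz1) (mem_Ioi.2 (by linarith)) (by linarith) (by linarith)
  simp only [Function.comp_apply, sub_sub_cancel, add_sub_cancel_left, div_one] at hslope
  rw [hlog, le_div_iff₀ ha] at hslope
  rw [← log_le_log_iff (by positivity) (Gamma_pos_of_pos (by linarith)),
    log_mul (by positivity) (Gamma_pos_of_pos (by linarith)).ne', log_rpow hz1]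
  linarith

noncomputable def mittagLeffler (α β x : ℝ) : ℝ := ∑' n : ℕ, x ^ n / Gamma (α * n + β)

theorem summable_mittagLeffler {α β : ℝ} (hα : 0 < α) (hβ : 0 < β) (x : ℝ) :
    Summable fun n : ℕ => x ^ n / Gamma (α * n + β) := by
  refine summable_of_ratio_norm_eventually_le (r := 1 / 2) (by norm_num) ?_
  have hz : Tendsto (fun n : ℕ => α * n + β) atTop atTop :=
    tendsto_atTop_add_const_right _ _ (tendsto_natCast_atTop_atTop.const_mul_atTop hα)
  have hgrowth : Tendsto (fun n : ℕ => (α * n + β - 1) ^ α) atTop atTop :=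
    (tendsto_rpow_atTop hα).comp (tendsto_atTop_add_const_right _ (-1) hz)
  filter_upwards [hz.eventually_gt_atTop 1, hgrowth.eventually_ge_atTop (2 * |x|)]
    with n hz1 hgrowth_n
  have hΓ := rpow_sub_one_mul_Gamma_le_Gamma_add hz1 hα
  have hΓz : 0 < Gamma (α * n + β) := Gamma_pos_of_pos (by linarith)
  have hΓzα : 0 < Gamma (α * n + β + α) := Gamma_pos_of_pos (by linarith)
  have hratio : 2 * |x| * Gamma (α * n + β) ≤ Gamma (α * n + β + α) :=
    (mul_le_mul_of_nonneg_right hgrowth_n hΓz.le).trans hΓ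
  rw [show α * ((n + 1 : ℕ) : ℝ) + β = α * n + β + α by push_cast; ring, norm_div, norm_div,
    norm_pow, norm_pow, Real.norm_of_nonneg hΓz.le, Real.norm_of_nonneg hΓzα.le,
    div_le_iff₀ hΓzα, pow_succ, Real.norm_eq_abs]
  calc |x| ^ n * |x|
      = 1 / 2 * (|x| ^ n / Gamma (α * n + β)) * (2 * |x| * Gamma (α * n + β)) := by
        field_simp
    _ ≤ 1 / 2 * (|x| ^ n / Gamma (α * n + β)) * Gamma (α * n + β + α) := by gcongr

theorem mittagLeffler_eq_inv_Gamma_add {α β : ℝ} (hα : 0 < α) (hβ : 0 < β) (x : ℝ) :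
    mittagLeffler α β x = (Gamma β)⁻¹ + x * mittagLeffler α (α + β) x := by
  rw [mittagLeffler, (summable_mittagLeffler hα hβ x).tsum_eq_zero_add, mittagLeffler,
    ← tsum_mul_left]
  congr 1
  · simp
  · refine tsum_congr fun n => ?_
    rw [pow_succ', mul_div_assoc]
    push_cast
    ring_nf

theorem MeasureTheory.integral_tsum_mul_of_nonneg {X ι : Type*} [MeasurableSpace X]
    [Countable ι] {μ : Measure X} {a : ι → ℝ} {φ : ι → X → ℝ} (hφ : ∀ i, 0 ≤ᵐ[μ] φ i)
    (hint : ∀ i, Integrable (φ i) μ) (hsum : Summable fun i => a i * ∫ x, φ i x ∂μ) :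
    ∫ x, ∑' i, a i * φ i x ∂μ = ∑' i, a i * ∫ x, φ i x ∂μ := by
  have hnorm : ∀ i, ∫ x, ‖a i * φ i x‖ ∂μ = |a i * ∫ x, φ i x ∂μ| := fun i => by
    rw [abs_mul, abs_of_nonneg (integral_nonneg_of_ae (hφ i)), ← integral_const_mul]
    refine integral_congr_ae ((hφ i).mono fun x hx => ?_)
    simp only [norm_mul, Real.norm_eq_abs, abs_of_nonneg (hx : 0 ≤ φ i x)]
  simp_rw [← integral_const_mul]
  exact (integral_tsum_of_summable_integral_norm (fun i => (hint i).const_mul (a i))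
    (by simpa only [hnorm] using hsum.abs)).symm

theorem integral_rpow_mul_sub_rpow {u v t : ℝ} (hu : 0 < u) (hv : 0 < v) (ht : 0 < t) :
    ∫ s in (0)..t, s ^ (u - 1) * (t - s) ^ (v - 1) =
      Gamma u * Gamma v / Gamma (u + v) * t ^ (u + v - 1) := by
  apply Complex.ofReal_injective
  rw [← intervalIntegral.integral_ofReal]
  have hcongr : EqOn (fun s : ℝ => ((s ^ (u - 1) * (t - s) ^ (v - 1) : ℝ) : ℂ))
      (fun s : ℝ => (s : ℂ) ^ ((u : ℂ) - 1) * ((t : ℂ) - s) ^ ((v : ℂ) - 1)) (uIcc 0 t) := by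
    intro s hs
    rw [uIcc_of_le ht.le] at hs
    push_cast
    rw [Complex.ofReal_cpow hs.1, Complex.ofReal_cpow (sub_nonneg.2 hs.2)]
    push_cast
    rfl
  rw [intervalIntegral.integral_congr hcongr, Complex.betaIntegral_scaled _ _ ht,
    Complex.betaIntegral_eq_Gamma_mul_div _ _ (by simpa using hu) (by simpa using hv)]
  push_cast
  rw [Complex.ofReal_cpow ht.le, ← Complex.ofReal_add, Complex.Gamma_ofReal,
    Complex.Gamma_ofReal, Complex.Gamma_ofReal]
  push_cast
  ring

theorem intervalIntegrable_rpow_mul_sub_rpow {u v t : ℝ} (hu : 0 < u) (hv : 0 < v) (ht : 0 < t) :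
    IntervalIntegrable (fun s => s ^ (u - 1) * (t - s) ^ (v - 1)) volume 0 t := by
  refine intervalIntegral.intervalIntegrable_of_integral_ne_zero ?_
  rw [integral_rpow_mul_sub_rpow hu hv ht]
  have := Gamma_pos_of_pos hu
  have := Gamma_pos_of_pos hv
  have := Gamma_pos_of_pos (add_pos hu hv)
  positivity

theorem Wd_eq_tsum (α c b : ℝ) {s : ℝ} (hs : 0 < s) :
    Wd α c b s = ∑' n : ℕ, c⁻¹ * (-(b / c)) ^ n / Gamma (α * (n + 1)) * s ^ (α * (n + 1) - 1) := by
  rw [Wd, mlf, ← tsum_mul_left]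
  refine tsum_congr fun n => ?_
  rw [mul_pow, ← rpow_natCast (s ^ α), ← rpow_mul hs.le,
    show α * ((n : ℝ) + 1) - 1 = (α - 1) + α * n by ring, rpow_add hs]
  ring

theorem integral_kernel_mul_Wd_eq_mittagLeffler {α c b t : ℝ} (hα : 0 < α) (hα1 : α < 1)
    (hc : c ≠ 0) (ht : 0 < t) :
    ∫ s in (0)..t, (c * (t - s) ^ (-α) / Gamma (1 - α)) * Wd α c b s =
      mittagLeffler α 1 (-(b / c) * t ^ α) := by
  set a : ℕ → ℝ := fun n => c / Gamma (1 - α) * (c⁻¹ * (-(b / c)) ^ n / Gamma (α * (n + 1)))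
  set φ : ℕ → ℝ → ℝ := fun n s => s ^ (α * (n + 1) - 1) * (t - s) ^ ((1 - α) - 1)
  have hu : ∀ n : ℕ, 0 < α * (n + 1) := fun n => by positivity
  have hα1' : 0 < 1 - α := by linarith
  have hterm : ∀ n : ℕ,
      a n * ∫ s in Ioc 0 t, φ n s = (-(b / c) * t ^ α) ^ n / Gamma (α * n + 1) := by
    intro n
    rw [← intervalIntegral.integral_of_le ht.le, integral_rpow_mul_sub_rpow (hu n) hα1' ht,
      show α * (n + 1) + (1 - α) = α * n + 1 by ring, add_sub_cancel_right, mul_pow,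
      rpow_mul ht.le, rpow_natCast]
    have := (Gamma_pos_of_pos hα1').ne'
    have := (Gamma_pos_of_pos (hu n)).ne'
    simp only [a]
    field_simp
  calc ∫ s in (0)..t, (c * (t - s) ^ (-α) / Gamma (1 - α)) * Wd α c b s
      = ∫ s in Ioc 0 t, ∑' n, a n * φ n s := by
        rw [intervalIntegral.integral_of_le ht.le]
        refine setIntegral_congr_fun measurableSet_Ioc fun s hs => ?_
        rw [Wd_eq_tsum α c b hs.1, ← tsum_mul_left]
        refine tsum_congr fun n => ?_
        simp only [a, φ, show (1 - α) - 1 = -α by ring]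
        ring
    _ = ∑' n, a n * ∫ s in Ioc 0 t, φ n s := by
        refine integral_tsum_mul_of_nonneg (fun n => ?_) (fun n => ?_) ?_
        · exact ae_restrict_of_forall_mem measurableSet_Ioc fun s hs =>
            mul_nonneg (rpow_nonneg hs.1.le _) (rpow_nonneg (sub_nonneg.2 hs.2) _)
        · exact (intervalIntegrable_iff_integrableOn_Ioc_of_le ht.le).1
            (intervalIntegrable_rpow_mul_sub_rpow (hu n) hα1' ht)
        · simpa only [hterm] using summable_mittagLeffler hα one_pos _
    _ = mittagLeffler α 1 (-(b / c) * t ^ α) := tsum_congr hterm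

theorem Wsc_eq_mittagLeffler {α t : ℝ} (c b : ℝ) (hα : 0 < α) (ht : 0 < t) :
    Wsc α c b t = c⁻¹ * t ^ α * mittagLeffler α (α + 1) (-(b / c) * t ^ α) := by
  set a : ℕ → ℝ := fun n => c⁻¹ * (-(b / c)) ^ n / Gamma (α * (n + 1))
  set φ : ℕ → ℝ → ℝ := fun n s => s ^ (α * (n + 1) - 1)
  have hu : ∀ n : ℕ, 0 < α * (n + 1) := fun n => by positivity
  have hterm : ∀ n : ℕ, a n * ∫ s in Ioc 0 t, φ n s =
      c⁻¹ * t ^ α * ((-(b / c) * t ^ α) ^ n / Gamma (α * n + (α + 1))) := by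
    intro n
    rw [← intervalIntegral.integral_of_le ht.le, integral_rpow (Or.inl (by linarith [hu n])),
      sub_add_cancel, zero_rpow (hu n).ne', sub_zero,
      show α * n + (α + 1) = α * (n + 1) + 1 by ring, Gamma_add_one (hu n).ne',
      show α * (n + 1) = α * n + α by ring, rpow_add ht, rpow_mul ht.le, rpow_natCast, mul_pow]
    have := (Gamma_pos_of_pos (hu n)).ne'
    have := (hu n).ne'
    simp only [a]
    field_simp
  calc Wsc α c b t = ∫ s in Ioc 0 t, ∑' n, a n * φ n s := by
        rw [Wsc, if_neg ht.not_ge, intervalIntegral.integral_of_le ht.le]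
        exact setIntegral_congr_fun measurableSet_Ioc fun s hs => Wd_eq_tsum α c b hs.1
    _ = ∑' n, a n * ∫ s in Ioc 0 t, φ n s := by
        refine integral_tsum_mul_of_nonneg (fun n => ?_) (fun n => ?_) ?_
        · exact ae_restrict_of_forall_mem measurableSet_Ioc fun s hs => rpow_nonneg hs.1.le _
        · exact (intervalIntegrable_iff_integrableOn_Ioc_of_le ht.le).1
            (intervalIntegral.intervalIntegrable_rpow' (by linarith [hu n]))
        · simpa only [hterm] using (summable_mittagLeffler hα (by linarith) _).mul_left _
    _ = c⁻¹ * t ^ α * mittagLeffler α (α + 1) (-(b / c) * t ^ α) := by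
        rw [tsum_congr hterm, tsum_mul_left, mittagLeffler]

theorem K_conv_Wd_general (α c b : ℝ) (hα : 0 < α) (hα1 : α < 1) (hc : 0 < c) :
    ∀ t > (0:ℝ),
      (∫ s in (0:ℝ)..t, (c * (t - s) ^ (-α) / Real.Gamma (1 - α)) * Wd α c b s)
        = 1 - b * Wsc α c b t := by
  intro t ht
  rw [integral_kernel_mul_Wd_eq_mittagLeffler hα hα1 hc.ne' ht, Wsc_eq_mittagLeffler c b hα ht,
    mittagLeffler_eq_inv_Gamma_add hα one_pos, Gamma_one]
  ring

theorem K_conv_Wd (α c b : ℝ) (hα : 0 < α) (hα1 : α < 1) (hc : 0 < c) (hb : 0 ≤ b) :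
    ∀ t > (0:ℝ),
      (∫ s in (0:ℝ)..t, (c * (t - s) ^ (-α) / Real.Gamma (1 - α)) * Wd α c b s)
        = 1 - b * Wsc α c b t :=
  K_conv_Wd_general α c b hα hα1 hc
end

section
/- For α ∈ (0,1), lim_{t→0+} t^{-α} ∫_0^∞ (1 - e^{-t x}) · α (1+x)^{-1-α} dx = Γ(1-α); that is, 1 minus the Laplace transform of the probability density x ↦ α(1+x)^{-1-α} is asymptotically equivalent to Γ(1-α) t^{α} as t → 0+. -/
/-!
After the substitution `y = t x`, the quantity becomes `α ∫₀^∞ (1 - e^{-y}) (t + y)^{-1-α} dy`,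
which tends to `α ∫₀^∞ (1 - e^{-y}) y^{-1-α} dy` by dominated convergence, the integrand being
dominated by its value at `t = 0`; that limit is integrable since `1 - e^{-y} ≤ min y 1`.
Integrating by parts against `-y^{-α} / α` turns the limit into `∫₀^∞ e^{-y} y^{-α} dy = Γ(1 - α)`.
-/

open MeasureTheory Set Filter Topology Real

lemma one_sub_exp_neg_nonneg {y : ℝ} (hy : 0 ≤ y) : 0 ≤ 1 - exp (-y) :=
  sub_nonneg.2 (exp_le_one_iff.2 (neg_nonpos.2 hy))

lemma one_sub_exp_neg_le_self (y : ℝ) : 1 - exp (-y) ≤ y := by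
  linarith [one_sub_le_exp_neg y]

lemma one_sub_exp_neg_le_one (y : ℝ) : 1 - exp (-y) ≤ 1 := by
  linarith [exp_pos (-y)]

lemma integrableOn_one_sub_exp_neg_mul_rpow {α : ℝ} (hα : 0 < α) (hα1 : α < 1) :
    IntegrableOn (fun y : ℝ => (1 - exp (-y)) * y ^ (-1 - α)) (Ioi 0) := by
  have hcont : ContinuousOn (fun y : ℝ => (1 - exp (-y)) * y ^ (-1 - α)) (Ioi 0) :=
    (by fun_prop : Continuous fun y : ℝ => 1 - exp (-y)).continuousOn.mul
      (continuousOn_id.rpow_const fun y hy => Or.inl (ne_of_gt hy))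
  have hnorm : ∀ y ∈ Ioi (0 : ℝ),
      ‖(1 - exp (-y)) * y ^ (-1 - α)‖ = (1 - exp (-y)) * y ^ (-1 - α) := fun y hy =>
    norm_of_nonneg (mul_nonneg (one_sub_exp_neg_nonneg hy.out.le) (rpow_nonneg hy.out.le _))
  rw [← Ioc_union_Ioi_eq_Ioi zero_le_one, integrableOn_union]
  constructor
  · have hint : IntegrableOn (fun y : ℝ => y ^ (-α)) (Ioc 0 1) :=
      (intervalIntegrable_iff_integrableOn_Ioc_of_le zero_le_one).1
        (intervalIntegral.intervalIntegrable_rpow' (by linarith))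
    refine hint.mono' ((hcont.mono Ioc_subset_Ioi_self).aestronglyMeasurable measurableSet_Ioc)
      ((ae_restrict_iff' measurableSet_Ioc).2 (ae_of_all _ fun y hy => ?_))
    rw [hnorm y hy.1, show -α = -1 - α + 1 by ring, rpow_add_one hy.1.ne', mul_comm _ y]
    exact mul_le_mul_of_nonneg_right (one_sub_exp_neg_le_self y) (rpow_nonneg hy.1.le _)
  · have hint : IntegrableOn (fun y : ℝ => y ^ (-1 - α)) (Ioi 1) :=
      integrableOn_Ioi_rpow_of_lt (by linarith) one_pos
    refine hint.mono' ((hcont.mono (Ioi_subset_Ioi zero_le_one)).aestronglyMeasurable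
      measurableSet_Ioi) ((ae_restrict_iff' measurableSet_Ioi).2 (ae_of_all _ fun y hy => ?_))
    have hy0 : (0 : ℝ) < y := zero_lt_one.trans hy
    rw [hnorm y hy0]
    exact mul_le_of_le_one_left (rpow_nonneg hy0.le _) (one_sub_exp_neg_le_one y)

lemma tendsto_one_sub_exp_neg_mul_rpow_nhdsGT_zero {α : ℝ} (hα1 : α < 1) :
    Tendsto (fun y : ℝ => (1 - exp (-y)) * y ^ (-α)) (𝓝[>] 0) (𝓝 0) := by
  have hpow : Tendsto (fun y : ℝ => y ^ (1 - α)) (𝓝[>] 0) (𝓝 0) := by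
    have := (continuousAt_rpow_const 0 (1 - α) (Or.inr (by linarith))).tendsto
    rw [zero_rpow (by linarith)] at this
    exact this.mono_left nhdsWithin_le_nhds
  refine squeeze_zero' ?_ ?_ hpow <;> filter_upwards [self_mem_nhdsWithin] with y (hy : 0 < y)
  · exact mul_nonneg (one_sub_exp_neg_nonneg hy.le) (rpow_nonneg hy.le _)
  · rw [show 1 - α = -α + 1 by ring, rpow_add_one hy.ne', mul_comm _ y]
    exact mul_le_mul_of_nonneg_right (one_sub_exp_neg_le_self y) (rpow_nonneg hy.le _)

lemma integral_one_sub_exp_neg_mul_rpow {α : ℝ} (hα : 0 < α) (hα1 : α < 1) :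
    ∫ y in Ioi 0, (1 - exp (-y)) * y ^ (-1 - α) = Gamma (1 - α) / α := by
  set u : ℝ → ℝ := fun y => 1 - exp (-y)
  set v : ℝ → ℝ := fun y => -(y ^ (-α) / α)
  have hu : ∀ y ∈ Ioi (0 : ℝ), HasDerivAt u (exp (-y)) y := fun y _ => by
    simpa using ((hasDerivAt_neg y).exp).const_sub 1
  have hv : ∀ y ∈ Ioi (0 : ℝ), HasDerivAt v (y ^ (-1 - α)) y := fun y hy => by
    refine ((hasDerivAt_rpow_const (p := -α) (Or.inl hy.out.ne')).div_const α).neg.congr_deriv ?_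
    rw [show -α - 1 = -1 - α by ring]
    field_simp
  have h_zero : Tendsto (u * v) (𝓝[>] 0) (𝓝 0) := by
    have := ((tendsto_one_sub_exp_neg_mul_rpow_nhdsGT_zero hα1).div_const α).neg
    rw [zero_div, neg_zero] at this
    exact this.congr fun y => by simp only [u, v, Pi.mul_apply]; ring
  have h_infty : Tendsto (u * v) atTop (𝓝 0) := by
    have hu_top : Tendsto u atTop (𝓝 1) := by
      simpa using tendsto_exp_neg_atTop_nhds_zero.const_sub 1
    have := hu_top.mul ((tendsto_rpow_neg_atTop hα).div_const α).neg
    rwa [zero_div, neg_zero, mul_zero] at this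
  have hGamma : IntegrableOn (fun y => exp (-y) * v y) (Ioi 0) := by
    refine IntegrableOn.congr_fun
      ((GammaIntegral_convergent (s := 1 - α) (by linarith)).div_const α).neg
      (fun y _ => ?_) measurableSet_Ioi
    simp only [v, Pi.neg_apply, sub_sub_cancel_left, mul_neg, mul_div_assoc]
  rw [integral_Ioi_mul_deriv_eq_deriv_mul hu hv
    (integrableOn_one_sub_exp_neg_mul_rpow hα hα1) hGamma h_zero h_infty,
    Gamma_eq_integral (by linarith)]
  simp only [v, sub_sub_cancel_left, mul_neg, integral_neg, zero_sub, sub_neg_eq_add,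
    neg_zero, zero_add, ← mul_div_assoc, integral_div]

lemma tendsto_setIntegral_mul_add_rpow {f : ℝ → ℝ} {r : ℝ} (hr : r ≤ 0)
    (hf : AEStronglyMeasurable f (volume.restrict (Ioi 0)))
    (hint : IntegrableOn (fun y => f y * y ^ r) (Ioi 0)) :
    Tendsto (fun t => ∫ y in Ioi 0, f y * (t + y) ^ r) (𝓝[>] 0)
      (𝓝 (∫ y in Ioi 0, f y * y ^ r)) := by
  refine tendsto_integral_filter_of_dominated_convergence _ ?_ ?_ hint.norm ?_
  · filter_upwards [self_mem_nhdsWithin] with t (ht : 0 < t)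
    refine hf.mul (ContinuousOn.aestronglyMeasurable ?_ measurableSet_Ioi)
    exact (continuousOn_const.add continuousOn_id).rpow_const fun y (hy : 0 < y) =>
      Or.inl (add_pos ht hy).ne'
  · filter_upwards [self_mem_nhdsWithin] with t (ht : 0 < t)
    refine (ae_restrict_iff' measurableSet_Ioi).2 (ae_of_all _ fun y (hy : 0 < y) => ?_)
    rw [norm_mul, norm_mul, norm_of_nonneg (rpow_nonneg (by positivity) _),
      norm_of_nonneg (rpow_nonneg hy.le _)]
    exact mul_le_mul_of_nonneg_left (rpow_le_rpow_of_nonpos hy (by linarith) hr) (norm_nonneg _)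
  · refine (ae_restrict_iff' measurableSet_Ioi).2 (ae_of_all _ fun y (hy : 0 < y) => ?_)
    have : ContinuousAt (fun t => f y * (t + y) ^ r) 0 :=
      continuousAt_const.mul ((continuousAt_id.add continuousAt_const).rpow_const
        (Or.inl (by simpa using hy.ne')))
    simpa using this.tendsto.mono_left nhdsWithin_le_nhds

lemma rpow_add_one_mul_setIntegral_comp_mul_left (g : ℝ → ℝ) (r : ℝ) {t : ℝ} (ht : 0 < t) :
    t ^ (r + 1) * ∫ x in Ioi 0, g (t * x) * (1 + x) ^ r = ∫ y in Ioi 0, g y * (t + y) ^ r := by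
  have hpoint : ∀ x ∈ Ioi (0 : ℝ),
      g (t * x) * (1 + x) ^ r = t ^ (-r) * (g (t * x) * (t + t * x) ^ r) := fun x (hx : 0 < x) => by
    rw [show t + t * x = t * (1 + x) by ring, mul_rpow ht.le (by positivity), rpow_neg ht.le]
    field_simp
  rw [setIntegral_congr_fun measurableSet_Ioi hpoint, integral_const_mul,
    integral_comp_mul_left_Ioi (fun y => g y * (t + y) ^ r) 0 ht, mul_zero, smul_eq_mul,
    ← mul_assoc, ← mul_assoc, rpow_add_one ht.ne', rpow_neg ht.le]
  field_simp

theorem laplace_transform_pareto_asymptotic (α : ℝ) (hα : 0 < α) (hα1 : α < 1) :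
    Filter.Tendsto
      (fun t : ℝ => t ^ (-α) *
        ∫ x in Set.Ioi (0:ℝ), (1 - Real.exp (-t * x)) * (α * (1 + x) ^ (-1 - α)))
      (nhdsWithin 0 (Set.Ioi 0)) (nhds (Real.Gamma (1 - α))) := by
  have hlim := (tendsto_setIntegral_mul_add_rpow (by linarith)
    (by fun_prop : Continuous fun y : ℝ => 1 - exp (-y)).aestronglyMeasurable
    (integrableOn_one_sub_exp_neg_mul_rpow hα hα1)).const_mul α
  rw [integral_one_sub_exp_neg_mul_rpow hα hα1, mul_div_cancel₀ _ hα.ne'] at hlim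
  refine hlim.congr' ?_
  filter_upwards [self_mem_nhdsWithin] with t (ht : 0 < t)
  rw [← rpow_add_one_mul_setIntegral_comp_mul_left _ _ ht, show -1 - α + 1 = -α by ring]
  simp only [neg_mul, mul_left_comm _ α, integral_const_mul]
end

section
/- Let α ∈ (0,1), C₀ > 0, and let W₀ : ℝ → ℝ satisfy W₀(x) = 0 for x ≤ 0 and be differentiable on (0,∞) with 0 ≤ W₀'(t) ≤ C₀ t^{α-1} for all t > 0. Then for every p > 1+α there exists a constant C > 0 such that for all h ∈ (0,1], ∫_0^1 |W₀(s+h) - W₀(s)|^p (s+h)^{-α-1} ds + ∫_0^h ∫_0^s |W₀(s) - W₀(s-y)|^p y^{-α-2} dy ds ≤ C h^{(p-1)α}. -/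
/-!
From `0 ≤ W₀' t ≤ C₀ t ^ (α - 1)` we get, for `0 < a ≤ b`,
`0 ≤ W₀ b - W₀ a ≤ (C₀ / α) (b ^ α - a ^ α) ≤ (C₀ / α) b ^ (α - 1) (b - a)`.
This single bound dominates both integrands by power functions. After the substitution
`x = s + h` the first integrand is at most `(C₀ / α) ^ p h ^ p x ^ ((α - 1) p - α - 1)`, whose
integral over `x ≥ h` is a multiple of `h ^ ((p - 1) α)`. The inner integrand of the second term
is at most `(C₀ / α) ^ p s ^ ((α - 1) p) y ^ (p - α - 2)`, integrable at `y = 0` because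
`p > 1 + α`; it gives a multiple of `s ^ ((p - 1) α - 1)`, which integrates over `(0, h)` to a
multiple of `h ^ ((p - 1) α)`.
-/

open MeasureTheory Set

/-- No integrability of `f` is needed: a non-integrable `f` has integral `0`. -/
theorem intervalIntegral.integral_mono_of_nonneg_Ioo {μ : Measure ℝ} [NullSingletonClass μ]
    {f g : ℝ → ℝ} {a b : ℝ} (hab : a ≤ b) (hg : IntervalIntegrable g μ a b)
    (hf : ∀ x ∈ Ioo a b, 0 ≤ f x) (hfg : ∀ x ∈ Ioo a b, f x ≤ g x) :
    ∫ x in a..b, f x ∂μ ≤ ∫ x in a..b, g x ∂μ := by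
  simp only [intervalIntegral.integral_of_le hab, integral_Ioc_eq_integral_Ioo]
  have hmem : ∀ᵐ x ∂μ.restrict (Ioo a b), x ∈ Ioo a b := ae_restrict_mem measurableSet_Ioo
  exact integral_mono_of_nonneg (hmem.mono hf) (hg.1.mono_set Ioo_subset_Ioc_self) (hmem.mono hfg)

theorem integral_rpow_of_neg_one_lt {b r : ℝ} (hr : -1 < r) :
    ∫ x in (0:ℝ)..b, x ^ r = b ^ (r + 1) / (r + 1) := by
  rw [integral_rpow (Or.inl hr), Real.zero_rpow (by linarith), sub_zero]

theorem integral_rpow_le_of_lt_neg_one {a b r : ℝ} (ha : 0 < a) (hab : a ≤ b) (hr : r < -1) :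
    ∫ x in a..b, x ^ r ≤ a ^ (r + 1) / -(r + 1) := by
  have hzero : (0:ℝ) ∉ uIcc a b := by
    rw [uIcc_of_le hab]
    exact fun h => ha.not_ge h.1
  rw [integral_rpow (Or.inr ⟨hr.ne, hzero⟩), ← neg_div_neg_eq, neg_sub]
  have hb : 0 ≤ b ^ (r + 1) := Real.rpow_nonneg (ha.le.trans hab) _
  gcongr <;> linarith

theorem Real.rpow_sub_rpow_le_mul_sub {a b α : ℝ} (ha : 0 < a) (hab : a ≤ b) (hα : α ≤ 1) :
    b ^ α - a ^ α ≤ b ^ (α - 1) * (b - a) := by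
  have hb : 0 < b := ha.trans_le hab
  have hpow : b ^ (α - 1) ≤ a ^ (α - 1) := Real.rpow_le_rpow_of_nonpos ha hab (by linarith)
  have hbα : b ^ (α - 1) * b = b ^ α := by rw [Real.rpow_sub_one hb.ne', div_mul_cancel₀ _ hb.ne']
  have haα : a ^ (α - 1) * a = a ^ α := by rw [Real.rpow_sub_one ha.ne', div_mul_cancel₀ _ ha.ne']
  rw [← hbα, ← haα]
  linarith [mul_le_mul_of_nonneg_left hpow ha.le]

theorem monotoneOn_Ioi_of_hasDerivAt_nonneg {f f' : ℝ → ℝ} {c : ℝ}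
    (hf : ∀ x > c, HasDerivAt f (f' x) x) (hf' : ∀ x > c, 0 ≤ f' x) : MonotoneOn f (Ioi c) := by
  refine monotoneOn_of_hasDerivWithinAt_nonneg (f' := f') (convex_Ioi c)
    (fun x hx => (hf x hx).continuousAt.continuousWithinAt) ?_ ?_
  · rw [interior_Ioi]
    exact fun x hx => (hf x hx).hasDerivWithinAt
  · rwa [interior_Ioi]

section IncrementBounds

variable {α C : ℝ} {f f' : ℝ → ℝ}

theorem nonneg_of_nonneg_le_mul_rpow (hf'₀ : ∀ t > 0, 0 ≤ f' t)
    (hf' : ∀ t > 0, f' t ≤ C * t ^ (α - 1)) : 0 ≤ C := by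
  simpa using (hf'₀ 1 one_pos).trans (hf' 1 one_pos)

variable (hα : 0 < α) (hα1 : α ≤ 1) (hf : ∀ t > 0, HasDerivAt f (f' t) t)
  (hf'₀ : ∀ t > 0, 0 ≤ f' t) (hf' : ∀ t > 0, f' t ≤ C * t ^ (α - 1))
include hα hα1 hf hf'₀ hf'

theorem abs_sub_le_of_hasDerivAt_le_rpow {a b : ℝ} (ha : 0 < a) (hab : a ≤ b) :
    |f b - f a| ≤ C / α * b ^ (α - 1) * (b - a) := by
  have hb : 0 < b := ha.trans_le hab
  have hC : 0 ≤ C := nonneg_of_nonneg_le_mul_rpow hf'₀ hf'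
  have hmono : f a ≤ f b := monotoneOn_Ioi_of_hasDerivAt_nonneg hf hf'₀ ha hb hab
  have hmajorant : MonotoneOn (fun t => C / α * t ^ α - f t) (Ioi 0) := by
    refine monotoneOn_Ioi_of_hasDerivAt_nonneg (fun t ht =>
      ((Real.hasDerivAt_rpow_const (Or.inl (ne_of_gt ht))).const_mul (C / α)).sub (hf t ht))
      fun t ht => ?_
    rw [← mul_assoc, div_mul_cancel₀ _ hα.ne', sub_nonneg]
    exact hf' t ht
  have hincr : f b - f a ≤ C / α * (b ^ α - a ^ α) := by
    have := hmajorant ha hb hab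
    simp only at this
    linarith
  rw [abs_of_nonneg (sub_nonneg.2 hmono), mul_assoc]
  exact hincr.trans (mul_le_mul_of_nonneg_left (Real.rpow_sub_rpow_le_mul_sub ha hab hα1)
    (by positivity))

theorem abs_sub_rpow_le_of_hasDerivAt_le_rpow {p x y : ℝ} (hp : 0 ≤ p) (hy : 0 ≤ y) (hyx : y < x) :
    |f x - f (x - y)| ^ p ≤ (C / α) ^ p * x ^ ((α - 1) * p) * y ^ p := by
  have hx : 0 < x := hy.trans_lt hyx
  have hC : 0 ≤ C := nonneg_of_nonneg_le_mul_rpow hf'₀ hf'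
  have hbound := abs_sub_le_of_hasDerivAt_le_rpow hα hα1 hf hf'₀ hf' (a := x - y) (b := x)
    (by linarith) (by linarith)
  rw [sub_sub_cancel] at hbound
  calc |f x - f (x - y)| ^ p ≤ (C / α * x ^ (α - 1) * y) ^ p :=
        Real.rpow_le_rpow (abs_nonneg _) hbound hp
    _ = (C / α) ^ p * x ^ ((α - 1) * p) * y ^ p := by
        rw [Real.mul_rpow (by positivity) hy, Real.mul_rpow (by positivity) (by positivity),
          ← Real.rpow_mul hx.le]

theorem integral_forward_difference_rpow_le {p h L : ℝ} (hp : 0 ≤ p) (hh : 0 < h) (hL : 0 ≤ L) :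
    ∫ s in (0:ℝ)..L, |f (s + h) - f s| ^ p * (s + h) ^ (-α - 1)
      ≤ (C / α) ^ p / (p + α - α * p) * h ^ ((p - 1) * α) := by
  set r := (α - 1) * p - α - 1 with hr_def
  have hr : r < -1 := by nlinarith
  have hsubst := intervalIntegral.integral_comp_add_right (a := 0) (b := L)
    (fun x => |f x - f (x - h)| ^ p * x ^ (-α - 1)) h
  simp only [add_sub_cancel_right, zero_add] at hsubst
  rw [hsubst]
  calc ∫ x in h..L + h, |f x - f (x - h)| ^ p * x ^ (-α - 1)
      ≤ ∫ x in h..L + h, (C / α) ^ p * h ^ p * x ^ r := by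
        refine intervalIntegral.integral_mono_of_nonneg_Ioo (by linarith)
          ((intervalIntegral.intervalIntegrable_rpow (Or.inr ?_)).const_mul _)
          (fun x hx => by have := hh.trans hx.1; positivity) fun x hx => ?_
        · rw [uIcc_of_le (by linarith)]
          exact fun h0 => hh.not_ge h0.1
        have hx0 : 0 < x := hh.trans hx.1
        calc |f x - f (x - h)| ^ p * x ^ (-α - 1)
            ≤ (C / α) ^ p * x ^ ((α - 1) * p) * h ^ p * x ^ (-α - 1) :=
              mul_le_mul_of_nonneg_right
                (abs_sub_rpow_le_of_hasDerivAt_le_rpow hα hα1 hf hf'₀ hf' hp hh.le hx.1)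
                (Real.rpow_nonneg hx0.le _)
          _ = (C / α) ^ p * h ^ p * x ^ r := by
              have hsplit : x ^ r = x ^ ((α - 1) * p) * x ^ (-α - 1) := by
                rw [← Real.rpow_add hx0, hr_def]
                ring_nf
              rw [hsplit]
              ring
    _ = (C / α) ^ p * h ^ p * ∫ x in h..L + h, x ^ r := intervalIntegral.integral_const_mul _ _
    _ ≤ (C / α) ^ p * h ^ p * (h ^ (r + 1) / -(r + 1)) := by
        have hC : 0 ≤ C := nonneg_of_nonneg_le_mul_rpow hf'₀ hf'
        gcongr
        exact integral_rpow_le_of_lt_neg_one hh (le_add_of_nonneg_left hL) hr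
    _ = (C / α) ^ p / (p + α - α * p) * h ^ ((p - 1) * α) := by
        have hexp : h ^ p * h ^ (r + 1) = h ^ ((p - 1) * α) := by
          rw [← Real.rpow_add hh, hr_def]
          ring_nf
        rw [show -(r + 1) = p + α - α * p by ring, ← hexp]
        ring

theorem integral_backward_difference_rpow_le {p s : ℝ} (hp : 1 + α < p) (hs : 0 < s) :
    ∫ y in (0:ℝ)..s, |f s - f (s - y)| ^ p * y ^ (-α - 2)
      ≤ (C / α) ^ p / (p - α - 1) * s ^ ((p - 1) * α - 1) := by
  calc ∫ y in (0:ℝ)..s, |f s - f (s - y)| ^ p * y ^ (-α - 2)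
      ≤ ∫ y in (0:ℝ)..s, (C / α) ^ p * s ^ ((α - 1) * p) * y ^ (p - α - 2) := by
        refine intervalIntegral.integral_mono_of_nonneg_Ioo hs.le
          ((intervalIntegral.intervalIntegrable_rpow' (by linarith)).const_mul _)
          (fun y hy => by have := hy.1; positivity) fun y hy => ?_
        calc |f s - f (s - y)| ^ p * y ^ (-α - 2)
            ≤ (C / α) ^ p * s ^ ((α - 1) * p) * y ^ p * y ^ (-α - 2) :=
              mul_le_mul_of_nonneg_right
                (abs_sub_rpow_le_of_hasDerivAt_le_rpow hα hα1 hf hf'₀ hf' (by linarith) hy.1.le hy.2)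
                (Real.rpow_nonneg hy.1.le _)
          _ = (C / α) ^ p * s ^ ((α - 1) * p) * y ^ (p - α - 2) := by
              rw [mul_assoc _ (y ^ p), ← Real.rpow_add hy.1]
              ring_nf
    _ = (C / α) ^ p * s ^ ((α - 1) * p) * (s ^ (p - α - 1) / (p - α - 1)) := by
        rw [intervalIntegral.integral_const_mul, integral_rpow_of_neg_one_lt (by linarith)]
        ring_nf
    _ = (C / α) ^ p / (p - α - 1) * s ^ ((p - 1) * α - 1) := by
        have hexp : s ^ ((α - 1) * p) * s ^ (p - α - 1) = s ^ ((p - 1) * α - 1) := by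
          rw [← Real.rpow_add hs]
          ring_nf
        rw [← hexp]
        ring

theorem integral_integral_backward_difference_rpow_le {p h : ℝ} (hp : 1 + α < p) (hh : 0 < h) :
    ∫ s in (0:ℝ)..h, ∫ y in (0:ℝ)..s, |f s - f (s - y)| ^ p * y ^ (-α - 2)
      ≤ (C / α) ^ p / ((p - α - 1) * ((p - 1) * α)) * h ^ ((p - 1) * α) := by
  have hq : 0 < (p - 1) * α := mul_pos (by linarith) hα
  calc ∫ s in (0:ℝ)..h, ∫ y in (0:ℝ)..s, |f s - f (s - y)| ^ p * y ^ (-α - 2)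
      ≤ ∫ s in (0:ℝ)..h, (C / α) ^ p / (p - α - 1) * s ^ ((p - 1) * α - 1) := by
        refine intervalIntegral.integral_mono_of_nonneg_Ioo hh.le
          ((intervalIntegral.intervalIntegrable_rpow' (by linarith)).const_mul _)
          (fun s hs => intervalIntegral.integral_nonneg hs.1.le fun y hy => ?_)
          fun s hs => integral_backward_difference_rpow_le hα hα1 hf hf'₀ hf' hp hs.1
        have := hy.1
        positivity
    _ = (C / α) ^ p / ((p - α - 1) * ((p - 1) * α)) * h ^ ((p - 1) * α) := by
        rw [intervalIntegral.integral_const_mul, integral_rpow_of_neg_one_lt (by linarith),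
          sub_add_cancel]
        field_simp

end IncrementBounds

theorem scale_function_increment_integral_bound_general
    (α C₀ : ℝ) (hα : 0 < α) (hα1 : α < 1) (hC₀ : 0 < C₀)
    (W₀ W₀' : ℝ → ℝ)
    (hderiv : ∀ t > (0:ℝ), HasDerivAt W₀ (W₀' t) t)
    (hnn : ∀ t > (0:ℝ), 0 ≤ W₀' t)
    (hbd : ∀ t > (0:ℝ), W₀' t ≤ C₀ * t ^ (α - 1)) :
    ∀ p > 1 + α, ∃ C > (0:ℝ), ∀ h : ℝ, 0 < h → h ≤ 1 →
      (∫ s in (0:ℝ)..1, |W₀ (s + h) - W₀ s| ^ p * (s + h) ^ (-α - 1))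
        + (∫ s in (0:ℝ)..h, ∫ y in (0:ℝ)..s, |W₀ s - W₀ (s - y)| ^ p * y ^ (-α - 2))
      ≤ C * h ^ ((p - 1) * α) := by
  intro p hp
  have hforward : 0 < p + α - α * p := by nlinarith
  have hbackward : 0 < (p - α - 1) * ((p - 1) * α) :=
    mul_pos (by linarith) (mul_pos (by linarith) hα)
  refine ⟨(C₀ / α) ^ p / (p + α - α * p) + (C₀ / α) ^ p / ((p - α - 1) * ((p - 1) * α)),
    add_pos (by positivity) (by positivity), fun h hh _ => ?_⟩
  rw [add_mul]
  exact add_le_add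
    (integral_forward_difference_rpow_le hα hα1.le hderiv hnn hbd (by linarith) hh zero_le_one)
    (integral_integral_backward_difference_rpow_le hα hα1.le hderiv hnn hbd hp hh)

theorem scale_function_increment_integral_bound
    (α C₀ : ℝ) (hα : 0 < α) (hα1 : α < 1) (hC₀ : 0 < C₀)
    (W₀ W₀' : ℝ → ℝ) (hzero : ∀ x ≤ (0:ℝ), W₀ x = 0)
    (hderiv : ∀ t > (0:ℝ), HasDerivAt W₀ (W₀' t) t)
    (hnn : ∀ t > (0:ℝ), 0 ≤ W₀' t)
    (hbd : ∀ t > (0:ℝ), W₀' t ≤ C₀ * t ^ (α - 1)) :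
    ∀ p > 1 + α, ∃ C > (0:ℝ), ∀ h : ℝ, 0 < h → h ≤ 1 →
      (∫ s in (0:ℝ)..1, |W₀ (s + h) - W₀ s| ^ p * (s + h) ^ (-α - 1))
        + (∫ s in (0:ℝ)..h, ∫ y in (0:ℝ)..s, |W₀ s - W₀ (s - y)| ^ p * y ^ (-α - 2))
      ≤ C * h ^ ((p - 1) * α) :=
  scale_function_increment_integral_bound_general α C₀ hα hα1 hC₀ W₀ W₀' hderiv hnn hbd
end

section
/- There exists a constant C > 0 such that for all K, T > 0, every f ∈ A_{T,K} and every s ∈ (0,T], |V_α f(s)| ≤ C K² e^{(K/α) s^{α}} s^{α-1}. -/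
open MeasureTheory

/-- The nonlinear operator
`V_α f(t) = ∫_0^∞ (exp(∫_{(t-y)⁺}^t f) - 1 - ∫_{(t-y)⁺}^t f) ν_α(dy)`,
where `ν_α(dy) = (cα(α+1)/Γ(1-α)) y^{-α-2} dy`. -/
noncomputable def Valpha (α c : ℝ) (f : ℝ → ℂ) (t : ℝ) : ℂ :=
  ∫ y in Set.Ioi (0:ℝ),
    (Complex.exp (∫ r in (max (t - y) 0)..t, f r) - 1 - ∫ r in (max (t - y) 0)..t, f r)
      * ((c * α * (α + 1) / Real.Gamma (1 - α) * y ^ (-α - 2) : ℝ) : ℂ)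

/-! Write `G(y) = ∫_{(s-y)⁺}^s f`. Integrating `‖f t‖ ≤ K t^{α-1}` gives
`‖G(y)‖ ≤ (K/α)(s^α - (s-y)⁺^α) ≤ (K/α) s^α min(y/s, 1)`, the second step because `x^α ≥ x` on
`[0, 1]`. Together with `‖e^z - 1 - z‖ ≤ ‖z‖² e^{‖z‖}` this dominates the integrand of `V_α f(s)`
by a multiple of `(K/α)² s^{2α} e^{(K/α) s^α} min(y/s, 1)² y^{-α-2}`, and
`∫_0^∞ min(y/s, 1)² y^{-α-2} dy = s^{-α-1} (1/(1-α) + 1/(1+α))`: the linear decay of `G` at `0`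
tames the singularity of `ν_α`, its boundedness the tail. -/

open Set

lemma Complex.norm_exp_sub_one_sub_self_le (z : ℂ) :
    ‖Complex.exp z - 1 - z‖ ≤ ‖z‖ ^ 2 * Real.exp ‖z‖ := by
  simpa [Finset.sum_range_succ, sub_sub] using Complex.norm_exp_sub_sum_le_norm_mul_exp z 2

lemma Real.rpow_sub_rpow_le_rpow_sub_one_mul {α m s : ℝ} (hα : α ≤ 1) (hm : 0 ≤ m)
    (hms : m ≤ s) : s ^ α - m ^ α ≤ s ^ (α - 1) * (s - m) := by
  rcases (hm.trans hms).eq_or_lt with rfl | hs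
  · obtain rfl : m = 0 := le_antisymm hms hm
    simp
  have hm_pow : s ^ (α - 1) * m ≤ m ^ α := by
    rcases hm.eq_or_lt with rfl | hm
    · simpa using Real.rpow_nonneg le_rfl α
    calc s ^ (α - 1) * m ≤ m ^ (α - 1) * m :=
          mul_le_mul_of_nonneg_right (Real.rpow_le_rpow_of_nonpos hm hms (by linarith)) hm.le
      _ = m ^ α := by rw [Real.rpow_sub_one hm.ne', div_mul_cancel₀ _ hm.ne']
  have hs_pow : s ^ (α - 1) * s = s ^ α := by
    rw [Real.rpow_sub_one hs.ne', div_mul_cancel₀ _ hs.ne']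
  rw [mul_sub, hs_pow]
  linarith

section InnerIntegral

variable {f : ℝ → ℂ} {K α s : ℝ}

lemma norm_intervalIntegral_le_of_norm_le_rpow {m : ℝ} (hα : 0 < α) (hms : m ≤ s)
    (hf : ∀ t ∈ Ioc m s, ‖f t‖ ≤ K * t ^ (α - 1)) :
    ‖∫ t in m..s, f t‖ ≤ K / α * (s ^ α - m ^ α) :=
  calc ‖∫ t in m..s, f t‖ ≤ ∫ t in m..s, K * t ^ (α - 1) :=
        intervalIntegral.norm_integral_le_of_norm_le hms (ae_of_all _ hf)
          ((intervalIntegral.intervalIntegrable_rpow' (by linarith)).const_mul K)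
    _ = K / α * (s ^ α - m ^ α) := by
        rw [intervalIntegral.integral_const_mul, integral_rpow (Or.inl (by linarith)),
          sub_add_cancel]
        ring

lemma norm_intervalIntegral_max_sub_le (hα : 0 < α) (hα1 : α ≤ 1) (hK : 0 ≤ K) (hs : 0 < s)
    (hf : ∀ t ∈ Ioc 0 s, ‖f t‖ ≤ K * t ^ (α - 1)) {y : ℝ} (hy : 0 < y) :
    ‖∫ t in max (s - y) 0..s, f t‖ ≤ K / α * s ^ α * min (y / s) 1 := by
  set m := max (s - y) 0
  have hm : 0 ≤ m := le_max_right _ _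
  have hms : m ≤ s := max_le (by linarith) hs.le
  have hsm : s - m ≤ y := by linarith [le_max_left (s - y) 0]
  refine (norm_intervalIntegral_le_of_norm_le_rpow hα hms
    fun t ht => hf t ⟨hm.trans_lt ht.1, ht.2⟩).trans ?_
  rw [mul_assoc]
  refine mul_le_mul_of_nonneg_left ?_ (div_nonneg hK hα.le)
  rw [mul_min_of_nonneg _ _ (Real.rpow_nonneg hs.le α), mul_one]
  refine le_min ?_ ?_
  · calc s ^ α - m ^ α ≤ s ^ (α - 1) * (s - m) :=
          Real.rpow_sub_rpow_le_rpow_sub_one_mul hα1 hm hms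
      _ ≤ s ^ (α - 1) * y := by gcongr
      _ = s ^ α * (y / s) := by rw [Real.rpow_sub_one hs.ne']; ring
  · simpa using Real.rpow_nonneg hm α

end InnerIntegral

section OuterIntegral

variable {α ρ : ℝ}

lemma min_div_one_sq_mul_rpow_of_le {y : ℝ} (hy : 0 < y) (hyρ : y ≤ ρ) :
    min (y / ρ) 1 ^ 2 * y ^ (-α - 2) = (ρ ^ 2)⁻¹ * y ^ (-α) := by
  have hy2 : y ^ (-α) = y ^ (-α - 2) * y ^ 2 := by
    rw [← Real.rpow_add_natCast hy.ne']; norm_num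
  rw [min_eq_left ((div_le_one (hy.trans_le hyρ)).2 hyρ), hy2]
  ring

lemma min_div_one_sq_mul_rpow_of_lt {y : ℝ} (hρ : 0 < ρ) (hρy : ρ < y) :
    min (y / ρ) 1 ^ 2 * y ^ (-α - 2) = y ^ (-α - 2) := by
  rw [min_eq_right ((one_le_div hρ).2 hρy.le), one_pow, one_mul]

lemma integrableOn_min_div_one_sq_mul_rpow (hα : -1 < α) (hα1 : α < 1) (hρ : 0 < ρ) :
    IntegrableOn (fun y => min (y / ρ) 1 ^ 2 * y ^ (-α - 2)) (Ioi 0) := by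
  rw [← Ioc_union_Ioi_eq_Ioi hρ.le, integrableOn_union]
  constructor
  · exact ((intervalIntegral.intervalIntegrable_rpow' (by linarith : -1 < -α)).const_mul
      (ρ ^ 2)⁻¹).1.congr_fun (fun y hy => (min_div_one_sq_mul_rpow_of_le hy.1 hy.2).symm)
      measurableSet_Ioc
  · exact (integrableOn_Ioi_rpow_of_lt (by linarith) hρ).congr_fun
      (fun y hy => (min_div_one_sq_mul_rpow_of_lt hρ hy).symm) measurableSet_Ioi

lemma integral_min_div_one_sq_mul_rpow (hα : -1 < α) (hα1 : α < 1) (hρ : 0 < ρ) :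
    ∫ y in Ioi 0, min (y / ρ) 1 ^ 2 * y ^ (-α - 2) =
      ρ ^ (-α - 1) * (1 / (1 - α) + 1 / (α + 1)) := by
  have hint := integrableOn_min_div_one_sq_mul_rpow hα hα1 hρ
  rw [← Ioc_union_Ioi_eq_Ioi hρ.le] at hint ⊢
  rw [setIntegral_union (Ioc_disjoint_Ioi le_rfl) measurableSet_Ioi
      (hint.mono_set subset_union_left) (hint.mono_set subset_union_right),
    setIntegral_congr_fun measurableSet_Ioc fun y hy => min_div_one_sq_mul_rpow_of_le hy.1 hy.2,
    setIntegral_congr_fun measurableSet_Ioi fun y hy => min_div_one_sq_mul_rpow_of_lt hρ hy,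
    integral_const_mul, ← intervalIntegral.integral_of_le hρ.le,
    integral_rpow (Or.inl (by linarith)), integral_Ioi_rpow_of_lt (by linarith) hρ,
    Real.zero_rpow (by linarith)]
  have hρ_pow : ρ ^ (-α + 1) = ρ ^ (-α - 1) * ρ ^ 2 := by
    rw [← Real.rpow_add_natCast hρ.ne']; push_cast; ring_nf
  rw [hρ_pow, show -α + 1 = 1 - α by ring, show -α - 2 + 1 = -α - 1 by ring]
  have : 1 - α ≠ 0 := by linarith
  have : α + 1 ≠ 0 := by linarith
  have : -α - 1 ≠ 0 := by linarith
  field_simp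
  ring

lemma norm_setIntegral_exp_sub_one_sub_mul_rpow_le {g : ℝ → ℂ} {b w : ℝ} (hα : -1 < α)
    (hα1 : α < 1) (hρ : 0 < ρ) (hw : 0 ≤ w) (hg : ∀ y > 0, ‖g y‖ ≤ b * min (y / ρ) 1) :
    ‖∫ y in Ioi 0, (Complex.exp (g y) - 1 - g y) * ((w * y ^ (-α - 2) : ℝ) : ℂ)‖ ≤
      w * b ^ 2 * Real.exp b * (ρ ^ (-α - 1) * (1 / (1 - α) + 1 / (α + 1))) := by
  rw [← integral_min_div_one_sq_mul_rpow hα hα1 hρ, ← integral_const_mul]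
  refine norm_integral_le_of_norm_le
    ((integrableOn_min_div_one_sq_mul_rpow hα hα1 hρ).const_mul _) ?_
  filter_upwards [ae_restrict_mem measurableSet_Ioi] with y (hy : 0 < y)
  have hmin : 0 < min (y / ρ) 1 := lt_min (div_pos hy hρ) one_pos
  have hb : 0 ≤ b := nonneg_of_mul_nonneg_left ((norm_nonneg _).trans (hg y hy)) hmin
  have hgb : ‖g y‖ ≤ b := (hg y hy).trans (mul_le_of_le_one_right hb (min_le_right _ _))
  rw [norm_mul, Complex.norm_real, Real.norm_of_nonneg (by positivity)]
  calc ‖Complex.exp (g y) - 1 - g y‖ * (w * y ^ (-α - 2))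
      ≤ ‖g y‖ ^ 2 * Real.exp ‖g y‖ * (w * y ^ (-α - 2)) := by
        gcongr
        exact Complex.norm_exp_sub_one_sub_self_le _
    _ ≤ (b * min (y / ρ) 1) ^ 2 * Real.exp b * (w * y ^ (-α - 2)) := by gcongr; exact hg y hy
    _ = w * b ^ 2 * Real.exp b * (min (y / ρ) 1 ^ 2 * y ^ (-α - 2)) := by ring

end OuterIntegral

theorem Valpha_pointwise_bound (α c : ℝ) (hα : 0 < α) (hα1 : α < 1) (hc : 0 < c) :
    ∃ C > (0:ℝ), ∀ K T : ℝ, 0 < K → 0 < T → ∀ f : ℝ → ℂ, Measurable f →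
      (∀ t : ℝ, 0 < t → t ≤ T → ‖f t‖ ≤ K * t ^ (α - 1)) →
      ∀ s : ℝ, 0 < s → s ≤ T →
        ‖Valpha α c f s‖ ≤ C * K ^ 2 * Real.exp (K / α * s ^ α) * s ^ (α - 1) := by
  set w := c * α * (α + 1) / Real.Gamma (1 - α)
  have hw : 0 < w := div_pos (by positivity) (Real.Gamma_pos_of_pos (by linarith))
  have hsum : 0 < 1 / (1 - α) + 1 / (α + 1) := by
    have : 0 < 1 - α := by linarith
    positivity
  refine ⟨w / α ^ 2 * (1 / (1 - α) + 1 / (α + 1)), by positivity, ?_⟩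
  intro K T hK _ f _ hf s hs hsT
  have hG (y : ℝ) (hy : y > 0) := norm_intervalIntegral_max_sub_le hα hα1.le hK.le hs
    (fun t ht => hf t ht.1 (ht.2.trans hsT)) hy
  have hs_pow : (s ^ α) ^ 2 * s ^ (-α - 1) = s ^ (α - 1) := by
    rw [sq, ← Real.rpow_add hs, ← Real.rpow_add hs]
    ring_nf
  calc ‖Valpha α c f s‖
      ≤ w * (K / α * s ^ α) ^ 2 * Real.exp (K / α * s ^ α) *
          (s ^ (-α - 1) * (1 / (1 - α) + 1 / (α + 1))) :=
        norm_setIntegral_exp_sub_one_sub_mul_rpow_le (by linarith) hα1 hs hw.le hG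
    _ = w / α ^ 2 * (1 / (1 - α) + 1 / (α + 1)) * K ^ 2 * Real.exp (K / α * s ^ α) *
          s ^ (α - 1) := by
        rw [← hs_pow]
        ring
end
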